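/- arXiv:2405.05773 — 5 statements merged into one kernel-verified Lean document; each statement's English description precedes it below -/
import Mathlib

section
/- Identifiability of the parametric hazard class: if gamma, alpha, tilde-gamma, tilde-alpha > 0 and h(t; gamma, alpha) = h(t; tilde-gamma, tilde-alpha) for all t > 0, then gamma = tilde-gamma and alpha = tilde-alpha. -/
/-!
Dividing the two hazards, `t ^ (γ - γ')` tends to `a γ' α' / a γ α ≠ 0` as `t → 0⁺`. A power of
`t` has a finite nonzero limit at `0⁺` only for exponent `0`, so `γ = γ'`, the limit is `1`, and
the coefficients agree; injectivity of `a γ` then gives `α = α'`.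
-/

open Filter Topology

theorem eq_zero_of_tendsto_rpow_nhdsGT_zero {r L : ℝ} (hL : L ≠ 0)
    (h : Tendsto (fun t : ℝ => t ^ r) (𝓝[>] 0) (𝓝 L)) : r = 0 := by
  rcases lt_trichotomy r 0 with hr | hr | hr
  · exact absurd h (not_tendsto_nhds_of_tendsto_atTop (tendsto_rpow_neg_nhdsGT_zero hr) L)
  · exact hr
  · have h₀ : Tendsto (fun t : ℝ => t ^ r) (𝓝[>] 0) (𝓝 0) := by
      have := (Real.continuousAt_rpow_const 0 r (Or.inr hr.le)).tendsto
      rw [Real.zero_rpow hr.ne'] at this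
      exact this.mono_left nhdsWithin_le_nhds
    exact absurd (tendsto_nhds_unique h h₀) hL

theorem eq_and_eq_of_mul_rpow_mul_eventuallyEq {c c' p q : ℝ} {f g : ℝ → ℝ}
    (hc : c ≠ 0) (hc' : c' ≠ 0)
    (hf : Tendsto f (𝓝[>] 0) (𝓝 1)) (hg : Tendsto g (𝓝[>] 0) (𝓝 1))
    (h : ∀ᶠ t in 𝓝[>] 0, c * t ^ p * f t = c' * t ^ q * g t) : p = q ∧ c = c' := by
  have hratio : ∀ᶠ t in 𝓝[>] 0, c' * g t / (c * f t) = t ^ (p - q) := by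
    filter_upwards [h, hf.eventually_ne one_ne_zero, self_mem_nhdsWithin] with t ht hft htpos
    have htq : t ^ q ≠ 0 := (Real.rpow_pos_of_pos htpos q).ne'
    rw [Real.rpow_sub htpos, div_eq_div_iff (mul_ne_zero hc hft) htq]
    linear_combination -ht
  have hlim : Tendsto (fun t : ℝ => t ^ (p - q)) (𝓝[>] 0) (𝓝 (c' / c)) := by
    have := (hg.const_mul c').div (hf.const_mul c) (by simpa using hc)
    simp only [mul_one] at this
    exact this.congr' hratio
  have hpq : p - q = 0 := eq_zero_of_tendsto_rpow_nhdsGT_zero (div_ne_zero hc' hc) hlim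
  simp only [hpq, Real.rpow_zero] at hlim
  have hone : c' / c = 1 := tendsto_nhds_unique hlim tendsto_const_nhds
  exact ⟨sub_eq_zero.mp hpq, ((div_eq_one_iff_eq hc).mp hone).symm⟩

theorem parametric_hazard_class_identifiable_general
    (a : ℝ → ℝ → ℝ) (b : ℝ → ℝ → ℝ → ℝ)
    (ha_pos : ∀ γ α : ℝ, 0 < γ → 0 < α → 0 < a γ α)
    (ha_inj : ∀ γ : ℝ, 0 < γ → ∀ α α' : ℝ, 0 < α → 0 < α' → a γ α = a γ α' → α = α')
    (hb_lim : ∀ γ α : ℝ, 0 < γ → 0 < α →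
      Filter.Tendsto (fun t => b t γ α) (nhdsWithin 0 (Set.Ioi 0)) (nhds 1))
    (γ α γ' α' : ℝ) (hγ : 0 < γ) (hα : 0 < α) (hγ' : 0 < γ') (hα' : 0 < α')
    (heq : ∀ t : ℝ, 0 < t →
      a γ α * t ^ (γ - 1) * b t γ α = a γ' α' * t ^ (γ' - 1) * b t γ' α') :
    γ = γ' ∧ α = α' := by
  obtain ⟨hexp, hcoef⟩ := eq_and_eq_of_mul_rpow_mul_eventuallyEq
    (ha_pos γ α hγ hα).ne' (ha_pos γ' α' hγ' hα').ne'
    (hb_lim γ α hγ hα) (hb_lim γ' α' hγ' hα')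
    (eventually_nhdsWithin_of_forall heq)
  obtain rfl : γ = γ' := by linarith
  exact ⟨rfl, ha_inj γ hγ α α' hα hα' hcoef⟩

/-- Identifiability of the parametric hazard class: if the hazard functions
`h(t; γ, α) = a(γ, α) * t^(γ-1) * b(t; γ, α)` agree for all `t > 0`, then the
parameters agree. -/
theorem parametric_hazard_class_identifiable
    (a : ℝ → ℝ → ℝ) (b : ℝ → ℝ → ℝ → ℝ)
    (ha_pos : ∀ γ α : ℝ, 0 < γ → 0 < α → 0 < a γ α)
    (ha_inj : ∀ γ : ℝ, 0 < γ → ∀ α α' : ℝ, 0 < α → 0 < α' → a γ α = a γ α' → α = α')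
    (hb_pos : ∀ t γ α : ℝ, 0 < t → 0 < γ → 0 < α → 0 < b t γ α)
    (hb_lim : ∀ γ α : ℝ, 0 < γ → 0 < α →
      Filter.Tendsto (fun t => b t γ α) (nhdsWithin 0 (Set.Ioi 0)) (nhds 1))
    (γ α γ' α' : ℝ) (hγ : 0 < γ) (hα : 0 < α) (hγ' : 0 < γ') (hα' : 0 < α')
    (heq : ∀ t : ℝ, 0 < t →
      a γ α * t ^ (γ - 1) * b t γ α = a γ' α' * t ^ (γ' - 1) * b t γ' α') :
    γ = γ' ∧ α = α' :=
  parametric_hazard_class_identifiable_general a b ha_pos ha_inj hb_lim γ α γ' α' hγ hα hγ' hα' heq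
end

section
/- Frailty-variance identification: if sigma > 0 and tilde-sigma > 0 are real numbers with (1 + sigma^2)^(1 + 1/sigma^2) = (1 + tilde-sigma^2)^(1 + 1/tilde-sigma^2), then sigma = tilde-sigma. -/
open Real Set

/- `(1 + 1/x) log (1 + x)` is the slope of the secant of the strictly convex `t ↦ t log t`
between `1` and `1 + x`. -/
theorem strictMonoOn_one_add_one_div_mul_log_one_add :
    StrictMonoOn (fun x : ℝ => (1 + 1 / x) * log (1 + x)) (Ioi 0) := by
  intro x (hx : 0 < x) y (hy : 0 < y) hxy
  have hsecant := strictConvexOn_mul_log.secant_strict_mono (a := 1) (x := 1 + x) (y := 1 + y)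
    (by norm_num) (by simp only [mem_Ici]; linarith) (by simp only [mem_Ici]; linarith)
    (by linarith) (by linarith) (by linarith)
  have hslope : ∀ t : ℝ, 0 < t →
      ((1 + t) * log (1 + t) - 1 * log 1) / (1 + t - 1) = (1 + 1 / t) * log (1 + t) := by
    intro t ht
    rw [log_one, mul_zero, sub_zero, add_sub_cancel_left]
    field_simp
    ring
  simpa only [hslope x hx, hslope y hy] using hsecant

theorem strictMonoOn_one_add_rpow_one_add_one_div :
    StrictMonoOn (fun x : ℝ => (1 + x) ^ (1 + 1 / x)) (Ioi 0) := by
  intro x (hx : 0 < x) y (hy : 0 < y) hxy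
  simp only [rpow_def_of_pos (by linarith : (0 : ℝ) < 1 + x),
    rpow_def_of_pos (by linarith : (0 : ℝ) < 1 + y), exp_lt_exp, mul_comm (log _)]
  exact strictMonoOn_one_add_one_div_mul_log_one_add hx hy hxy

/-- Frailty-variance identification: if `σ, σ' > 0` and
`(1 + σ²)^(1 + 1/σ²) = (1 + σ'²)^(1 + 1/σ'²)`, then `σ = σ'`. -/
theorem frailty_variance_identification
    (σ σ' : ℝ) (hσ : 0 < σ) (hσ' : 0 < σ')
    (heq : (1 + σ ^ 2) ^ (1 + 1 / σ ^ 2) = (1 + σ' ^ 2) ^ (1 + 1 / σ' ^ 2)) :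
    σ = σ' := by
  have hsq : σ ^ 2 = σ' ^ 2 :=
    strictMonoOn_one_add_rpow_one_add_one_div.injOn (pow_pos hσ 2) (pow_pos hσ' 2) heq
  exact (pow_left_inj₀ hσ.le hσ'.le two_ne_zero).mp hsq
end

section
/- The cross-ratio function of the shared Gamma frailty model is identically 1 + sigma^2: let sigma > 0, let L1, L2 be positive integers, and for k = 1,2 and j = 1,...,Lk let h^(k)_j : (0, infinity) -> (0, infinity) be continuous with H^(k)_j(t) = integral from 0 to t of h^(k)_j finite for all t; set H^(k) = sum over j of H^(k)_j and assume H^(k)(t) -> infinity as t -> infinity. Define S(t1,t2) = [1 + sigma^2 (H^(1)(t1) + H^(2)(t2))]^(-1/sigma^2) and f_{j1 j2}(t1,t2) = (1 + sigma^2) h^(1)_{j1}(t1) h^(2)_{j2}(t2) / [1 + sigma^2 (H^(1)(t1) + H^(2)(t2))]^(2 + 1/sigma^2). Then for all t1, t2 > 0 and all causes j1, j2, the quantity S(t1,t2) * f_{j1 j2}(t1,t2) divided by the product of (integral from t1 to infinity of the sum over j of f_{j j2}(u1, t2) du1) and (integral from t2 to infinity of the sum over j of f_{j1 j}(t1, u2)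 du2) equals 1 + sigma^2. -/
/-!
Write `B(u) = 1 + σ² (H(u) + c)`, with `c` the other marginal's cumulative hazard, and
`q = 1 + 1/σ²`. Since `1 + σ² = q σ²` and `B' = σ² Σⱼ hⱼ`, the integrand of each marginal tail
integral is (a constant times) `q B' / B ^ (q + 1)`, with antiderivative `-B ^ (-q)`, which
vanishes at infinity because the cumulative hazard diverges.
So both integrals equal `h · A ^ (-q)` with `A = 1 + σ² (H⁽¹⁾(t₁) + H⁽²⁾(t₂))`, and in the cross
ratio the powers of `A` cancel: `-1/σ² - (2 + 1/σ²) = -2q`.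
-/

open MeasureTheory Set Filter Topology

theorem hasDerivAt_setIntegral_Ioc_zero {h : ℝ → ℝ} (hcont : ContinuousOn h (Ioi 0)) {x : ℝ}
    (hx : 0 < x) (hint : IntegrableOn h (Ioc 0 x)) :
    HasDerivAt (fun t => ∫ u in Ioc 0 t, h u) (h x) x := by
  have hderiv : HasDerivAt (fun t => ∫ u in (0 : ℝ)..t, h u) (h x) x :=
    intervalIntegral.integral_hasDerivAt_right
      ((intervalIntegrable_iff_integrableOn_Ioc_of_le hx.le).mpr hint)
      (hcont.stronglyMeasurableAtFilter isOpen_Ioi x hx)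
      (hcont.continuousAt (isOpen_Ioi.mem_nhds hx))
  refine hderiv.congr_of_eventuallyEq ?_
  filter_upwards [Ioi_mem_nhds hx] with t ht
  exact (intervalIntegral.integral_of_le (f := h) ht.le).symm

theorem integral_Ioi_mul_deriv_div_rpow_add_one {B B' : ℝ → ℝ} {t q : ℝ} (hq : 0 < q)
    (hderiv : ∀ x ∈ Ici t, HasDerivAt B (B' x) x) (hB' : ∀ x ∈ Ioi t, 0 ≤ B' x)
    (hpos : ∀ x ∈ Ici t, 0 < B x) (htop : Tendsto B atTop atTop) :
    ∫ x in Ioi t, q * B' x / B x ^ (q + 1) = B t ^ (-q) := by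
  have hantideriv :
      ∀ x ∈ Ici t, HasDerivAt (fun y => -B y ^ (-q)) (q * B' x / B x ^ (q + 1)) x := by
    intro x hx
    refine ((hderiv x hx).rpow_const (p := -q) (Or.inl (hpos x hx).ne')).neg.congr_deriv ?_
    rw [show -q - 1 = -(q + 1) by ring, Real.rpow_neg (hpos x hx).le]
    ring
  have hnonneg : ∀ x ∈ Ioi t, 0 ≤ q * B' x / B x ^ (q + 1) := fun x hx =>
    div_nonneg (mul_nonneg hq.le (hB' x hx))
      (Real.rpow_nonneg (hpos x (Ioi_subset_Ici_self hx)).le _)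
  have hlim : Tendsto (fun y => -B y ^ (-q)) atTop (𝓝 0) := by
    simpa using ((tendsto_rpow_neg_atTop hq).comp htop).neg
  rw [integral_Ioi_of_hasDerivAt_of_nonneg' hantideriv hnonneg hlim]
  ring

section GammaFrailty

variable {ι : Type*} [Fintype ι] {h H : ι → ℝ → ℝ} {HS : ℝ → ℝ}

theorem cumHazard_nonneg (hnonneg : ∀ j, ∀ t : ℝ, 0 < t → 0 ≤ h j t)
    (hH : ∀ j t, H j t = ∫ u in Ioc (0 : ℝ) t, h j u) (hHS : ∀ t, HS t = ∑ j, H j t) (t : ℝ) :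
    0 ≤ HS t := by
  rw [hHS]
  refine Finset.sum_nonneg fun j _ => ?_
  rw [hH]
  exact setIntegral_nonneg measurableSet_Ioc fun u hu => hnonneg j u hu.1

theorem hasDerivAt_cumHazard (hcont : ∀ j, ContinuousOn (h j) (Ioi 0))
    (hint : ∀ j, ∀ t : ℝ, 0 < t → IntegrableOn (h j) (Ioc 0 t))
    (hH : ∀ j t, H j t = ∫ u in Ioc (0 : ℝ) t, h j u) (hHS : ∀ t, HS t = ∑ j, H j t)
    {x : ℝ} (hx : 0 < x) : HasDerivAt HS (∑ j, h j x) x := by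
  have hHS' : HS = fun t => ∑ j, ∫ u in Ioc (0 : ℝ) t, h j u := funext fun t => by simp [hHS, hH]
  rw [hHS']
  exact HasDerivAt.fun_sum fun j _ => hasDerivAt_setIntegral_Ioc_zero (hcont j) hx (hint j x hx)

theorem integral_Ioi_sum_gamma_subdensity {s : ℝ} (hs : 0 < s)
    (hcont : ∀ j, ContinuousOn (h j) (Ioi 0)) (hnonneg : ∀ j, ∀ t : ℝ, 0 < t → 0 ≤ h j t)
    (hint : ∀ j, ∀ t : ℝ, 0 < t → IntegrableOn (h j) (Ioc 0 t))
    (hH : ∀ j t, H j t = ∫ u in Ioc (0 : ℝ) t, h j u) (hHS : ∀ t, HS t = ∑ j, H j t)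
    (htop : Tendsto HS atTop atTop) (κ : ℝ) {c : ℝ} (hc : 0 ≤ c) {t : ℝ} (ht : 0 < t) :
    ∫ u in Ioi t, ∑ j, (1 + s) * h j u * κ / (1 + s * (HS u + c)) ^ (2 + 1 / s)
      = κ * (1 + s * (HS t + c)) ^ (-(1 + 1 / s)) := by
  have hintegrand : ∀ u, ∑ j, (1 + s) * h j u * κ / (1 + s * (HS u + c)) ^ (2 + 1 / s)
      = κ * ((1 + 1 / s) * (s * ∑ j, h j u) / (1 + s * (HS u + c)) ^ (1 + 1 / s + 1)) := by
    intro u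
    rw [show 1 + 1 / s + 1 = 2 + 1 / s by ring, ← Finset.sum_div, ← Finset.sum_mul,
      ← Finset.mul_sum]
    field_simp
    ring
  simp_rw [hintegrand, integral_const_mul]
  congr 1
  refine integral_Ioi_mul_deriv_div_rpow_add_one (by positivity) (fun x hx => ?_)
    (fun x hx => ?_) (fun x _ => ?_) ?_
  · exact (((hasDerivAt_cumHazard hcont hint hH hHS (ht.trans_le hx)).add_const c).const_mul
      s).const_add 1
  · exact mul_nonneg hs.le (Finset.sum_nonneg fun j _ => hnonneg j x (ht.trans hx))
  · have := cumHazard_nonneg hnonneg hH hHS x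
    positivity
  · exact tendsto_atTop_add_const_left _ _
      ((tendsto_atTop_add_const_right _ c htop).const_mul_atTop hs)

end GammaFrailty

theorem shared_gamma_frailty_cross_ratio_general
    (σ : ℝ) (hσ : 0 < σ) (L₁ L₂ : ℕ)
    (h₁ : Fin L₁ → ℝ → ℝ) (h₂ : Fin L₂ → ℝ → ℝ)
    (hcont₁ : ∀ j, ContinuousOn (h₁ j) (Set.Ioi 0))
    (hcont₂ : ∀ j, ContinuousOn (h₂ j) (Set.Ioi 0))
    (hpos₁ : ∀ j, ∀ t : ℝ, 0 < t → 0 < h₁ j t)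
    (hpos₂ : ∀ j, ∀ t : ℝ, 0 < t → 0 < h₂ j t)
    (hint₁ : ∀ j, ∀ t : ℝ, 0 < t → IntegrableOn (h₁ j) (Set.Ioc 0 t))
    (hint₂ : ∀ j, ∀ t : ℝ, 0 < t → IntegrableOn (h₂ j) (Set.Ioc 0 t))
    (H₁ : Fin L₁ → ℝ → ℝ) (H₂ : Fin L₂ → ℝ → ℝ)
    (hH₁ : ∀ j t, H₁ j t = ∫ u in Set.Ioc (0 : ℝ) t, h₁ j u)
    (hH₂ : ∀ j t, H₂ j t = ∫ u in Set.Ioc (0 : ℝ) t, h₂ j u)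
    (HS₁ HS₂ : ℝ → ℝ)
    (hHS₁ : ∀ t, HS₁ t = ∑ j, H₁ j t) (hHS₂ : ∀ t, HS₂ t = ∑ j, H₂ j t)
    (htop₁ : Filter.Tendsto HS₁ Filter.atTop Filter.atTop)
    (htop₂ : Filter.Tendsto HS₂ Filter.atTop Filter.atTop)
    (S : ℝ → ℝ → ℝ)
    (hS : ∀ t₁ t₂ : ℝ, S t₁ t₂ = (1 + σ ^ 2 * (HS₁ t₁ + HS₂ t₂)) ^ (-(1 / σ ^ 2)))
    (f : Fin L₁ → Fin L₂ → ℝ → ℝ → ℝ)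
    (hf : ∀ j₁ j₂, ∀ t₁ t₂ : ℝ, f j₁ j₂ t₁ t₂ =
      (1 + σ ^ 2) * h₁ j₁ t₁ * h₂ j₂ t₂ /
        (1 + σ ^ 2 * (HS₁ t₁ + HS₂ t₂)) ^ (2 + 1 / σ ^ 2)) :
    ∀ t₁ : ℝ, 0 < t₁ → ∀ t₂ : ℝ, 0 < t₂ → ∀ (j₁ : Fin L₁) (j₂ : Fin L₂),
      S t₁ t₂ * f j₁ j₂ t₁ t₂ /
        ((∫ u in Set.Ioi t₁, ∑ j, f j j₂ u t₂) *
          (∫ u in Set.Ioi t₂, ∑ j, f j₁ j t₁ u)) = 1 + σ ^ 2 := by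
  intro t₁ ht₁ t₂ ht₂ j₁ j₂
  have hs : 0 < σ ^ 2 := by positivity
  have hnonneg₁ j t (ht : 0 < t) : 0 ≤ h₁ j t := (hpos₁ j t ht).le
  have hnonneg₂ j t (ht : 0 < t) : 0 ≤ h₂ j t := (hpos₂ j t ht).le
  have hHS₁₀ := cumHazard_nonneg hnonneg₁ hH₁ hHS₁ t₁
  have hHS₂₀ := cumHazard_nonneg hnonneg₂ hH₂ hHS₂ t₂
  have I₁ : ∫ u in Ioi t₁, ∑ j, f j j₂ u t₂
      = h₂ j₂ t₂ * (1 + σ ^ 2 * (HS₁ t₁ + HS₂ t₂)) ^ (-(1 + 1 / σ ^ 2)) := by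
    simp only [hf]
    exact integral_Ioi_sum_gamma_subdensity hs hcont₁ hnonneg₁ hint₁ hH₁ hHS₁ htop₁ _ hHS₂₀ ht₁
  have I₂ : ∫ u in Ioi t₂, ∑ j, f j₁ j t₁ u
      = h₁ j₁ t₁ * (1 + σ ^ 2 * (HS₁ t₁ + HS₂ t₂)) ^ (-(1 + 1 / σ ^ 2)) := by
    simp only [hf, mul_right_comm _ (h₁ j₁ t₁), add_comm (HS₁ t₁)]
    exact integral_Ioi_sum_gamma_subdensity hs hcont₂ hnonneg₂ hint₂ hH₂ hHS₂ htop₂ _ hHS₁₀ ht₂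
  rw [I₁, I₂, hS, hf]
  set A := 1 + σ ^ 2 * (HS₁ t₁ + HS₂ t₂)
  have hA : 0 < A := by positivity
  have hexp : A ^ (-(1 / σ ^ 2)) / A ^ (2 + 1 / σ ^ 2)
      = A ^ (-(1 + 1 / σ ^ 2)) * A ^ (-(1 + 1 / σ ^ 2)) := by
    rw [← Real.rpow_sub hA, ← Real.rpow_add hA]
    ring_nf
  have hh : 0 < h₁ j₁ t₁ * h₂ j₂ t₂ := mul_pos (hpos₁ j₁ t₁ ht₁) (hpos₂ j₂ t₂ ht₂)
  calc _ = (1 + σ ^ 2) * (h₁ j₁ t₁ * h₂ j₂ t₂) * (A ^ (-(1 / σ ^ 2)) / A ^ (2 + 1 / σ ^ 2))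
        / (h₁ j₁ t₁ * h₂ j₂ t₂ * (A ^ (-(1 + 1 / σ ^ 2)) * A ^ (-(1 + 1 / σ ^ 2)))) := by ring
    _ = 1 + σ ^ 2 := by
      have hApow := Real.rpow_pos_of_pos hA (-(1 + 1 / σ ^ 2))
      rw [hexp, mul_assoc, mul_div_cancel_right₀ _ (by positivity)]

/-- The cross-ratio function of the shared Gamma frailty model is identically `1 + σ²`. -/
theorem shared_gamma_frailty_cross_ratio
    (σ : ℝ) (hσ : 0 < σ) (L₁ L₂ : ℕ) (hL₁ : 0 < L₁) (hL₂ : 0 < L₂)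
    (h₁ : Fin L₁ → ℝ → ℝ) (h₂ : Fin L₂ → ℝ → ℝ)
    (hcont₁ : ∀ j, ContinuousOn (h₁ j) (Set.Ioi 0))
    (hcont₂ : ∀ j, ContinuousOn (h₂ j) (Set.Ioi 0))
    (hpos₁ : ∀ j, ∀ t : ℝ, 0 < t → 0 < h₁ j t)
    (hpos₂ : ∀ j, ∀ t : ℝ, 0 < t → 0 < h₂ j t)
    (hint₁ : ∀ j, ∀ t : ℝ, 0 < t → IntegrableOn (h₁ j) (Set.Ioc 0 t))
    (hint₂ : ∀ j, ∀ t : ℝ, 0 < t → IntegrableOn (h₂ j) (Set.Ioc 0 t))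
    (H₁ : Fin L₁ → ℝ → ℝ) (H₂ : Fin L₂ → ℝ → ℝ)
    (hH₁ : ∀ j t, H₁ j t = ∫ u in Set.Ioc (0 : ℝ) t, h₁ j u)
    (hH₂ : ∀ j t, H₂ j t = ∫ u in Set.Ioc (0 : ℝ) t, h₂ j u)
    (HS₁ HS₂ : ℝ → ℝ)
    (hHS₁ : ∀ t, HS₁ t = ∑ j, H₁ j t) (hHS₂ : ∀ t, HS₂ t = ∑ j, H₂ j t)
    (htop₁ : Filter.Tendsto HS₁ Filter.atTop Filter.atTop)
    (htop₂ : Filter.Tendsto HS₂ Filter.atTop Filter.atTop)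
    (S : ℝ → ℝ → ℝ)
    (hS : ∀ t₁ t₂ : ℝ, S t₁ t₂ = (1 + σ ^ 2 * (HS₁ t₁ + HS₂ t₂)) ^ (-(1 / σ ^ 2)))
    (f : Fin L₁ → Fin L₂ → ℝ → ℝ → ℝ)
    (hf : ∀ j₁ j₂, ∀ t₁ t₂ : ℝ, f j₁ j₂ t₁ t₂ =
      (1 + σ ^ 2) * h₁ j₁ t₁ * h₂ j₂ t₂ /
        (1 + σ ^ 2 * (HS₁ t₁ + HS₂ t₂)) ^ (2 + 1 / σ ^ 2)) :
    ∀ t₁ : ℝ, 0 < t₁ → ∀ t₂ : ℝ, 0 < t₂ → ∀ (j₁ : Fin L₁) (j₂ : Fin L₂),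
      S t₁ t₂ * f j₁ j₂ t₁ t₂ /
        ((∫ u in Set.Ioi t₁, ∑ j, f j j₂ u t₂) *
          (∫ u in Set.Ioi t₂, ∑ j, f j₁ j t₁ u)) = 1 + σ ^ 2 :=
  shared_gamma_frailty_cross_ratio_general σ hσ L₁ L₂ h₁ h₂ hcont₁ hcont₂ hpos₁ hpos₂ hint₁ hint₂ H₁
    H₂ hH₁ hH₂ HS₁ HS₂ hHS₁ hHS₂ htop₁ htop₂ S hS f hf
end

section
/- Identification of the correlation parameter in the correlated Gamma frailty model: let sigma_1, sigma_2 > 0, let rho, tilde-rho be real numbers, and let H_1, H_2 : (0, infinity) -> [0, infinity) be functions such that there exist t1*, t2* > 0 with H_1(t1*) > 0 and H_2(t2*) > 0. Write A(t1,t2) = 1 + sigma_1^2 H_1(t1) + sigma_2^2 H_2(t2) and B_k(t) = 1 + sigma_k^2 H_k(t). If for all t1, t2 > 0, A(t1,t2)^(-rho/(sigma_1 sigma_2)) * B_1(t1)^(rho/(sigma_1 sigma_2) - 1/sigma_1^2) * B_2(t2)^(rho/(sigma_1 sigma_2) - 1/sigma_2^2) = A(t1,t2)^(-tilde-rho/(sigma_1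 sigma_2)) * B_1(t1)^(tilde-rho/(sigma_1 sigma_2) - 1/sigma_1^2) * B_2(t2)^(tilde-rho/(sigma_1 sigma_2) - 1/sigma_2^2), then rho = tilde-rho. -/
/-!
Splitting off the factors `B₁ ^ (-1/σ₁²)` and `B₂ ^ (-1/σ₂²)`, which do not involve the
correlation, each side becomes `(B₁ B₂ / A) ^ (ρ / (σ₁ σ₂))` times a common positive factor.
At `(t₁*, t₂*)` the base `B₁ B₂ / A` exceeds `1`, because `(1 + a)(1 + b) > 1 + a + b` for
`a, b > 0`, so `x ↦ (B₁ B₂ / A) ^ x` is injective and the exponents agree.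
-/

open Real

lemma rpow_neg_mul_rpow_sub_mul_rpow_sub {A B C : ℝ} (hA : 0 < A) (hB : 0 < B) (hC : 0 < C)
    (r c d : ℝ) :
    A ^ (-r) * B ^ (r - c) * C ^ (r - d) = (B * C / A) ^ r * (B ^ (-c) * C ^ (-d)) := by
  rw [sub_eq_add_neg, sub_eq_add_neg, rpow_add hB, rpow_add hC,
    div_rpow (mul_pos hB hC).le hA.le, mul_rpow hB.le hC.le, rpow_neg hA.le]
  ring

lemma one_lt_one_add_mul_one_add_div {a b : ℝ} (ha : 0 < a) (hb : 0 < b) :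
    1 < (1 + a) * (1 + b) / (1 + a + b) := by
  rw [one_lt_div (by linarith)]
  nlinarith [mul_pos ha hb]

theorem correlated_gamma_frailty_rho_identification_general
    (σ₁ σ₂ ρ ρ' : ℝ) (hσ₁ : 0 < σ₁) (hσ₂ : 0 < σ₂)
    (H₁ H₂ : ℝ → ℝ)
    (t₁s t₂s : ℝ) (ht₁s : 0 < t₁s) (ht₂s : 0 < t₂s)
    (hH₁pos : 0 < H₁ t₁s) (hH₂pos : 0 < H₂ t₂s)
    (heq : ∀ t₁ : ℝ, 0 < t₁ → ∀ t₂ : ℝ, 0 < t₂ →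
      (1 + σ₁ ^ 2 * H₁ t₁ + σ₂ ^ 2 * H₂ t₂) ^ (-(ρ / (σ₁ * σ₂))) *
        (1 + σ₁ ^ 2 * H₁ t₁) ^ (ρ / (σ₁ * σ₂) - 1 / σ₁ ^ 2) *
        (1 + σ₂ ^ 2 * H₂ t₂) ^ (ρ / (σ₁ * σ₂) - 1 / σ₂ ^ 2) =
      (1 + σ₁ ^ 2 * H₁ t₁ + σ₂ ^ 2 * H₂ t₂) ^ (-(ρ' / (σ₁ * σ₂))) *
        (1 + σ₁ ^ 2 * H₁ t₁) ^ (ρ' / (σ₁ * σ₂) - 1 / σ₁ ^ 2) *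
        (1 + σ₂ ^ 2 * H₂ t₂) ^ (ρ' / (σ₁ * σ₂) - 1 / σ₂ ^ 2)) :
    ρ = ρ' := by
  have ha : 0 < σ₁ ^ 2 * H₁ t₁s := by positivity
  have hb : 0 < σ₂ ^ 2 * H₂ t₂s := by positivity
  have hbase := one_lt_one_add_mul_one_add_div ha hb
  have h := heq t₁s ht₁s t₂s ht₂s
  rw [rpow_neg_mul_rpow_sub_mul_rpow_sub (by linarith) (by linarith) (by linarith),
    rpow_neg_mul_rpow_sub_mul_rpow_sub (by linarith) (by linarith) (by linarith),
    mul_left_inj' (by positivity), rpow_right_inj (by linarith) hbase.ne',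
    div_left_inj' (by positivity)] at h
  exact h

/-- Identification of the correlation parameter in the correlated Gamma frailty model:
equality of the two unconditional joint survival functions (with common baseline and
common `σ₁, σ₂`) forces `ρ = ρ'`. -/
theorem correlated_gamma_frailty_rho_identification
    (σ₁ σ₂ ρ ρ' : ℝ) (hσ₁ : 0 < σ₁) (hσ₂ : 0 < σ₂)
    (H₁ H₂ : ℝ → ℝ)
    (hH₁nonneg : ∀ t : ℝ, 0 < t → 0 ≤ H₁ t)
    (hH₂nonneg : ∀ t : ℝ, 0 < t → 0 ≤ H₂ t)
    (t₁s t₂s : ℝ) (ht₁s : 0 < t₁s) (ht₂s : 0 < t₂s)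
    (hH₁pos : 0 < H₁ t₁s) (hH₂pos : 0 < H₂ t₂s)
    (heq : ∀ t₁ : ℝ, 0 < t₁ → ∀ t₂ : ℝ, 0 < t₂ →
      (1 + σ₁ ^ 2 * H₁ t₁ + σ₂ ^ 2 * H₂ t₂) ^ (-(ρ / (σ₁ * σ₂))) *
        (1 + σ₁ ^ 2 * H₁ t₁) ^ (ρ / (σ₁ * σ₂) - 1 / σ₁ ^ 2) *
        (1 + σ₂ ^ 2 * H₂ t₂) ^ (ρ / (σ₁ * σ₂) - 1 / σ₂ ^ 2) =
      (1 + σ₁ ^ 2 * H₁ t₁ + σ₂ ^ 2 * H₂ t₂) ^ (-(ρ' / (σ₁ * σ₂))) *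
        (1 + σ₁ ^ 2 * H₁ t₁) ^ (ρ' / (σ₁ * σ₂) - 1 / σ₁ ^ 2) *
        (1 + σ₂ ^ 2 * H₂ t₂) ^ (ρ' / (σ₁ * σ₂) - 1 / σ₂ ^ 2)) :
    ρ = ρ' :=
  correlated_gamma_frailty_rho_identification_general σ₁ σ₂ ρ ρ' hσ₁ hσ₂ H₁ H₂ t₁s t₂s ht₁s ht₂s
    hH₁pos hH₂pos heq
end

section
/- Unconditional joint survival function of the correlated Gamma frailty model: let kappa_0, kappa_1, kappa_2, mu_0 > 0, set mu_k = kappa_0 + kappa_k, sigma_k = 1/sqrt(mu_k) for k = 1,2, and rho = kappa_0/sqrt(mu_1 mu_2). Then for all c1, c2 >= 0, the triple integral over (0,infinity)^3 of exp( -((mu_0/mu_1) y_0 + y_1) c1 - ((mu_0/mu_2) y_0 + y_2) c2 ) times the product over i = 0,1,2 of (mu_i^{kappa_i}/Gamma(kappa_i)) exp(-mu_i y_i) y_i^{kappa_i - 1}, with respect to dy_0 dy_1 dy_2, equals (1 + sigma_1^2 c1 + sigma_2^2 c2)^(-rho/(sigma_1 sigma_2)) * (1 + sigma_1^2 c1)^(-(1/sigma_1^2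 - rho/(sigma_1 sigma_2))) * (1 + sigma_2^2 c2)^(-(1/sigma_2^2 - rho/(sigma_1 sigma_2))). -/
/-!
The frailty exponent splits as `s₀ y₀ + c₁ y₁ + c₂ y₂` with `s₀ = μ₀ (c₁ / μ₁ + c₂ / μ₂)`, so the
triple integral factors into three Laplace transforms of Gamma densities, each equal to
`(1 + s / μ) ^ (-κ)`. Since `σₖ² = 1 / μₖ` and `ρ / (σ₁ σ₂) = κ₀`, the exponents of the claimed
product are `-κ₀`, `-(μ₁ - κ₀) = -κ₁` and `-(μ₂ - κ₀) = -κ₂`.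
-/

open MeasureTheory Real Set

noncomputable def gammaDensity (μ κ y : ℝ) : ℝ :=
  μ ^ κ / Gamma κ * exp (-μ * y) * y ^ (κ - 1)

theorem integral_exp_neg_mul_mul_gammaDensity {μ κ s : ℝ} (hμ : 0 < μ) (hκ : 0 < κ)
    (hs : -μ < s) :
    ∫ y in Ioi (0 : ℝ), exp (-(s * y)) * gammaDensity μ κ y = (1 + s / μ) ^ (-κ) := by
  have hμs : 0 < μ + s := by linarith
  have hΓ : Gamma κ ≠ 0 := (Gamma_pos_of_pos hκ).ne'
  have integrand_eq : ∀ y, exp (-(s * y)) * gammaDensity μ κ y =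
      μ ^ κ / Gamma κ * (y ^ (κ - 1) * exp (-((μ + s) * y))) := fun y => by
    rw [gammaDensity, show -((μ + s) * y) = -(s * y) + -μ * y by ring, exp_add]
    ring
  simp_rw [integrand_eq, integral_const_mul, integral_rpow_mul_exp_neg_mul_Ioi hκ hμs]
  calc μ ^ κ / Gamma κ * ((1 / (μ + s)) ^ κ * Gamma κ)
      = (μ / (μ + s)) ^ κ := by
        rw [div_rpow hμ.le hμs.le, div_rpow zero_le_one hμs.le, one_rpow]
        field_simp
    _ = (1 + s / μ) ^ (-κ) := by
        have hpos : 0 < (μ + s) / μ := div_pos hμs hμ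
        rw [show 1 + s / μ = (μ + s) / μ by field_simp, rpow_neg hpos.le, ← inv_rpow hpos.le,
          inv_div]

theorem integral_correlated_gamma_frailty {κ₀ κ₁ κ₂ μ₀ μ₁ μ₂ c₁ c₂ : ℝ}
    (hκ₀ : 0 < κ₀) (hκ₁ : 0 < κ₁) (hκ₂ : 0 < κ₂) (hμ₀ : 0 < μ₀) (hμ₁ : 0 < μ₁) (hμ₂ : 0 < μ₂)
    (hc₁ : -μ₁ < c₁) (hc₂ : -μ₂ < c₂) (hc : 0 < 1 + c₁ / μ₁ + c₂ / μ₂) :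
    ∫ y₀ in Ioi (0 : ℝ), ∫ y₁ in Ioi (0 : ℝ), ∫ y₂ in Ioi (0 : ℝ),
      exp (-(μ₀ / μ₁ * y₀ + y₁) * c₁ - (μ₀ / μ₂ * y₀ + y₂) * c₂) *
        (gammaDensity μ₀ κ₀ y₀ * gammaDensity μ₁ κ₁ y₁ * gammaDensity μ₂ κ₂ y₂) =
      (1 + c₁ / μ₁ + c₂ / μ₂) ^ (-κ₀) * (1 + c₁ / μ₁) ^ (-κ₁) * (1 + c₂ / μ₂) ^ (-κ₂) := by
  set s₀ := μ₀ / μ₁ * c₁ + μ₀ / μ₂ * c₂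
  have integrand_eq : ∀ y₀ y₁ y₂,
      exp (-(μ₀ / μ₁ * y₀ + y₁) * c₁ - (μ₀ / μ₂ * y₀ + y₂) * c₂) *
        (gammaDensity μ₀ κ₀ y₀ * gammaDensity μ₁ κ₁ y₁ * gammaDensity μ₂ κ₂ y₂) =
      exp (-(s₀ * y₀)) * gammaDensity μ₀ κ₀ y₀ *
        ((exp (-(c₁ * y₁)) * gammaDensity μ₁ κ₁ y₁) *
          (exp (-(c₂ * y₂)) * gammaDensity μ₂ κ₂ y₂)) := fun y₀ y₁ y₂ => by
    rw [show -(μ₀ / μ₁ * y₀ + y₁) * c₁ - (μ₀ / μ₂ * y₀ + y₂) * c₂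
        = -(s₀ * y₀) + (-(c₁ * y₁) + -(c₂ * y₂)) by ring, exp_add, exp_add]
    ring
  have hs₀ : 1 + s₀ / μ₀ = 1 + c₁ / μ₁ + c₂ / μ₂ := by
    simp only [s₀]
    field_simp
    ring
  have hs₀_gt : -μ₀ < s₀ := by
    have : 0 < μ₀ * (1 + s₀ / μ₀) := mul_pos hμ₀ (hs₀ ▸ hc)
    rw [mul_add, mul_div_cancel₀ _ hμ₀.ne'] at this
    linarith
  simp_rw [integrand_eq, integral_const_mul, integral_mul_const,
    integral_exp_neg_mul_mul_gammaDensity hμ₀ hκ₀ hs₀_gt,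
    integral_exp_neg_mul_mul_gammaDensity hμ₁ hκ₁ hc₁,
    integral_exp_neg_mul_mul_gammaDensity hμ₂ hκ₂ hc₂, hs₀]
  ring

/-- Unconditional joint survival function of the correlated Gamma frailty model:
`E[exp(-ε⁽¹⁾c₁ - ε⁽²⁾c₂)]`, computed as a triple integral against the three independent
Gamma densities, equals the stated product of powers. -/
theorem correlated_gamma_frailty_survival
    (κ₀ κ₁ κ₂ μ₀ : ℝ) (hκ₀ : 0 < κ₀) (hκ₁ : 0 < κ₁) (hκ₂ : 0 < κ₂) (hμ₀ : 0 < μ₀)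
    (μ₁ μ₂ σ₁ σ₂ ρ : ℝ)
    (hμ₁ : μ₁ = κ₀ + κ₁) (hμ₂ : μ₂ = κ₀ + κ₂)
    (hσ₁ : σ₁ = 1 / Real.sqrt μ₁) (hσ₂ : σ₂ = 1 / Real.sqrt μ₂)
    (hρ : ρ = κ₀ / Real.sqrt (μ₁ * μ₂))
    (c₁ c₂ : ℝ) (hc₁ : 0 ≤ c₁) (hc₂ : 0 ≤ c₂) :
    (∫ y₀ in Set.Ioi (0 : ℝ), ∫ y₁ in Set.Ioi (0 : ℝ), ∫ y₂ in Set.Ioi (0 : ℝ),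
      Real.exp (-(μ₀ / μ₁ * y₀ + y₁) * c₁ - (μ₀ / μ₂ * y₀ + y₂) * c₂) *
        ((μ₀ ^ κ₀ / Real.Gamma κ₀ * Real.exp (-μ₀ * y₀) * y₀ ^ (κ₀ - 1)) *
          (μ₁ ^ κ₁ / Real.Gamma κ₁ * Real.exp (-μ₁ * y₁) * y₁ ^ (κ₁ - 1)) *
          (μ₂ ^ κ₂ / Real.Gamma κ₂ * Real.exp (-μ₂ * y₂) * y₂ ^ (κ₂ - 1)))) =
    (1 + σ₁ ^ 2 * c₁ + σ₂ ^ 2 * c₂) ^ (-(ρ / (σ₁ * σ₂))) *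
      (1 + σ₁ ^ 2 * c₁) ^ (-(1 / σ₁ ^ 2 - ρ / (σ₁ * σ₂))) *
      (1 + σ₂ ^ 2 * c₂) ^ (-(1 / σ₂ ^ 2 - ρ / (σ₁ * σ₂))) := by
  have hμ₁_pos : 0 < μ₁ := by linarith
  have hμ₂_pos : 0 < μ₂ := by linarith
  have hσ₁_sq : σ₁ ^ 2 = 1 / μ₁ := by rw [hσ₁, div_pow, one_pow, sq_sqrt hμ₁_pos.le]
  have hσ₂_sq : σ₂ ^ 2 = 1 / μ₂ := by rw [hσ₂, div_pow, one_pow, sq_sqrt hμ₂_pos.le]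
  have hρ_div : ρ / (σ₁ * σ₂) = κ₀ := by
    have := sqrt_pos.2 hμ₁_pos
    have := sqrt_pos.2 hμ₂_pos
    rw [hρ, hσ₁, hσ₂, sqrt_mul hμ₁_pos.le]
    field_simp
  rw [hρ_div, hσ₁_sq, hσ₂_sq, one_div_one_div, one_div_one_div, one_div_mul_eq_div,
    one_div_mul_eq_div, show μ₁ - κ₀ = κ₁ by linarith, show μ₂ - κ₀ = κ₂ by linarith]
  exact integral_correlated_gamma_frailty hκ₀ hκ₁ hκ₂ hμ₀ hμ₁_pos hμ₂_pos (by linarith)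
    (by linarith) (by positivity)
end
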